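/- For all natural numbers n ≥ 1, the sum over k from 1 to n of C(n,k)²·k²·H_k·H_{n-k} equals n³/(4n-2)·C(2n,n)·[(H^{(2)}_n - H^{(2)}_{2n-1}) + (2H_n - H_{2n-1})·(2H_n - H_{2n-1} - (2n²-1)/(2n³-n²)) - (n-1)(2n²-2n+1)/(n³(2n-1)²)]. -/

import Mathlib

/-!
At a natural number `a ≥ k` the binomial polynomial `choosePoly k = X (X - 1) ⋯ (X - k + 1) / k!`
takes the value `C(a, k)`, its derivative is `C(a, k) (H a - H (a - k))` and its second derivative
is `C(a, k) ((H a - H (a - k))² - (H2 a - H2 (a - k)))`, by taking the logarithmic derivative of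
a product of linear factors. Vandermonde's identity `∑ C(a, j) C(b, m - j) = C(a + b, m)` holds
for all natural `a, b`, hence as a polynomial identity in each variable, so it may be
differentiated in `a`, in `b`, or in both. This evaluates the harmonic-weighted sums
`∑ C(m, j)² H j H (m - j)` and `∑ C(m, j) C(m + 1, m - j) H (m - j)`, and the sum of the theorem
reduces to them through `k = j + 1`, `k C(m + 1, k) = (m + 1) C(m, j)` and
`H (j + 1) = H j + 1 / (j + 1)`.
-/

open Finset BigOperators

def H (n : ℕ) : ℚ := ∑ i ∈ Finset.range n, 1 / (i + 1 : ℚ)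

def H2 (n : ℕ) : ℚ := ∑ i ∈ Finset.range n, 1 / ((i + 1 : ℚ))^2

namespace Polynomial

section NatCast

variable {R : Type*} [CommRing R] [IsDomain R] [CharZero R]

theorem eq_of_eval_natCast_eq {p q : R[X]} (h : ∀ n : ℕ, p.eval (n : R) = q.eval (n : R)) :
    p = q :=
  eq_of_infinite_eval_eq p q <|
    (Set.infinite_range_of_injective Nat.cast_injective).mono (by rintro _ ⟨n, rfl⟩; exact h n)

variable {ι : Type*} (s : Finset ι) (F G : ι → R[X]) (P : R[X])

theorem sum_eval_mul_eval_derivative_of_forall_natCast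
    (h : ∀ a b : ℕ, ∑ i ∈ s, (F i).eval (a : R) * (G i).eval (b : R) = P.eval ((a : R) + b))
    (a b : ℕ) :
    ∑ i ∈ s, (F i).eval (a : R) * (derivative (G i)).eval (b : R) =
      (derivative P).eval ((a : R) + b) := by
  have key : ∑ i ∈ s, C ((F i).eval (a : R)) * G i = P.comp (C (a : R) + X) :=
    eq_of_eval_natCast_eq fun b => by simp [eval_finsetSum, h]
  simpa [derivative_sum, derivative_comp, eval_finsetSum] using
    congrArg (fun p => (derivative p).eval (b : R)) key

theorem sum_eval_derivative_mul_eval_of_forall_natCast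
    (h : ∀ a b : ℕ, ∑ i ∈ s, (F i).eval (a : R) * (G i).eval (b : R) = P.eval ((a : R) + b))
    (a b : ℕ) :
    ∑ i ∈ s, (derivative (F i)).eval (a : R) * (G i).eval (b : R) =
      (derivative P).eval ((a : R) + b) := by
  have h' (b a : ℕ) : ∑ i ∈ s, (G i).eval (b : R) * (F i).eval (a : R) = P.eval ((b : R) + a) := by
    simpa only [mul_comm, add_comm] using h a b
  simpa only [mul_comm, add_comm] using
    sum_eval_mul_eval_derivative_of_forall_natCast s G F P h' b a

end NatCast

section ProdXSubC

variable {K ι : Type*} [Field K] [DecidableEq ι] (r : ι → K) {x : K}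

theorem eval_derivative_prod_X_sub_C {s : Finset ι} (hx : ∀ i ∈ s, x ≠ r i) :
    (derivative (∏ i ∈ s, (X - C (r i)))).eval x =
      (∏ i ∈ s, (x - r i)) * ∑ i ∈ s, 1 / (x - r i) := by
  induction s using Finset.induction_on with
  | empty => simp
  | insert j s hj ih =>
    have hxj : x - r j ≠ 0 := sub_ne_zero.mpr (hx j (mem_insert_self j s))
    rw [prod_insert hj, derivative_mul, prod_insert hj, sum_insert hj, eval_add, eval_mul,
      eval_mul, ih fun i hi => hx i (mem_insert_of_mem hi)]
    simp only [derivative_sub, derivative_X, derivative_C, sub_zero, eval_one, eval_sub, eval_X,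
      eval_C, eval_prod]
    field_simp

theorem eval_derivative_derivative_prod_X_sub_C {s : Finset ι} (hx : ∀ i ∈ s, x ≠ r i) :
    (derivative (derivative (∏ i ∈ s, (X - C (r i))))).eval x =
      (∏ i ∈ s, (x - r i)) * ((∑ i ∈ s, 1 / (x - r i)) ^ 2 - ∑ i ∈ s, 1 / (x - r i) ^ 2) := by
  induction s using Finset.induction_on with
  | empty => simp
  | insert j s hj ih =>
    have hxs : ∀ i ∈ s, x ≠ r i := fun i hi => hx i (mem_insert_of_mem hi)
    have hxj : x - r j ≠ 0 := sub_ne_zero.mpr (hx j (mem_insert_self j s))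
    rw [prod_insert hj, derivative_mul, derivative_add, derivative_mul, derivative_mul,
      prod_insert hj, sum_insert hj, sum_insert hj]
    simp only [derivative_sub, derivative_X, derivative_C, sub_zero, derivative_one, eval_add,
      eval_mul, eval_zero, eval_one, eval_sub, eval_X, eval_C, ih hxs,
      eval_derivative_prod_X_sub_C r hxs, eval_prod]
    field_simp
    ring

end ProdXSubC

end Polynomial

open Polynomial Nat

theorem sum_range_apply_natCast_sub (f : ℚ → ℚ) {a k : ℕ} (hk : k ≤ a) :
    ∑ i ∈ range k, f (a - i) = ∑ i ∈ range a, f (i + 1) - ∑ i ∈ range (a - k), f (i + 1) := by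
  induction k with
  | zero => simp
  | succ k ih =>
    obtain ⟨c, rfl⟩ : ∃ c, a = c + (k + 1) := ⟨a - (k + 1), by omega⟩
    rw [sum_range_succ, ih (by omega), show c + (k + 1) - k = c + 1 by omega, sum_range_succ,
      show c + (k + 1) - (k + 1) = c by omega]
    push_cast
    ring_nf

theorem H_sub_H_eq_sum {a k : ℕ} (hk : k ≤ a) :
    H a - H (a - k) = ∑ i ∈ range k, 1 / ((a : ℚ) - i) :=
  (sum_range_apply_natCast_sub (fun x => 1 / x) hk).symm

theorem H2_sub_H2_eq_sum {a k : ℕ} (hk : k ≤ a) :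
    H2 a - H2 (a - k) = ∑ i ∈ range k, 1 / ((a : ℚ) - i) ^ 2 :=
  (sum_range_apply_natCast_sub (fun x => 1 / x ^ 2) hk).symm

theorem H_succ (n : ℕ) : H (n + 1) = H n + 1 / ((n : ℚ) + 1) := sum_range_succ _ n

theorem H2_succ (n : ℕ) : H2 (n + 1) = H2 n + 1 / ((n : ℚ) + 1) ^ 2 := sum_range_succ _ n

noncomputable def choosePoly (k : ℕ) : ℚ[X] := C (k ! : ℚ)⁻¹ * ∏ i ∈ range k, (X - C (i : ℚ))

theorem eval_natCast_choosePoly (a k : ℕ) : (choosePoly k).eval (a : ℚ) = a.choose k := by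
  rw [choosePoly, eval_C_mul, eval_prod]
  simp only [eval_sub, eval_X, eval_C]
  rw [← descPochhammer_eval_eq_prod_range, descPochhammer_eval_eq_descFactorial,
    descFactorial_eq_factorial_mul_choose, cast_mul, inv_mul_cancel_left₀ (by positivity)]

theorem natCast_ne_of_mem_range {a k i : ℕ} (hk : k ≤ a) (hi : i ∈ range k) : (a : ℚ) ≠ i := by
  have := mem_range.mp hi
  exact_mod_cast (by omega : a ≠ i)

theorem eval_natCast_derivative_choosePoly {a k : ℕ} (hk : k ≤ a) :
    (derivative (choosePoly k)).eval (a : ℚ) = a.choose k * (H a - H (a - k)) := by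
  rw [choosePoly, derivative_C_mul, eval_C_mul,
    eval_derivative_prod_X_sub_C _ fun i hi => natCast_ne_of_mem_range hk hi, ← mul_assoc,
    ← eval_natCast_choosePoly, choosePoly, eval_C_mul, eval_prod, H_sub_H_eq_sum hk]
  simp only [eval_sub, eval_X, eval_C]

theorem eval_natCast_derivative_derivative_choosePoly {a k : ℕ} (hk : k ≤ a) :
    (derivative (derivative (choosePoly k))).eval (a : ℚ) =
      a.choose k * ((H a - H (a - k)) ^ 2 - (H2 a - H2 (a - k))) := by
  rw [choosePoly, derivative_C_mul, derivative_C_mul, eval_C_mul,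
    eval_derivative_derivative_prod_X_sub_C _ fun i hi => natCast_ne_of_mem_range hk hi,
    ← mul_assoc, ← eval_natCast_choosePoly, choosePoly, eval_C_mul, eval_prod, H_sub_H_eq_sum hk,
    H2_sub_H2_eq_sum hk]
  simp only [eval_sub, eval_X, eval_C]

theorem sum_range_choose_mul_choose (a b m : ℕ) :
    ∑ j ∈ range (m + 1), (a.choose j : ℚ) * b.choose (m - j) = (a + b).choose m := by
  rw [add_choose_eq, Finset.Nat.sum_antidiagonal_eq_sum_range_succ_mk]
  push_cast
  rfl

theorem sum_eval_choosePoly_mul_eval_choosePoly (m a b : ℕ) :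
    ∑ j ∈ range (m + 1), (choosePoly j).eval (a : ℚ) * (choosePoly (m - j)).eval (b : ℚ) =
      (choosePoly m).eval ((a : ℚ) + b) := by
  simp only [eval_natCast_choosePoly, ← cast_add, sum_range_choose_mul_choose]

theorem vandermonde_derivative_right {a b m : ℕ} (hb : m ≤ b) :
    ∑ j ∈ range (m + 1), (a.choose j : ℚ) * (b.choose (m - j) * (H b - H (b - (m - j)))) =
      (a + b).choose m * (H (a + b) - H (a + b - m)) := by
  have h := sum_eval_mul_eval_derivative_of_forall_natCast _ _ _ _
    (sum_eval_choosePoly_mul_eval_choosePoly m) a b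
  rw [← cast_add, eval_natCast_derivative_choosePoly (by omega)] at h
  rw [← h]
  refine sum_congr rfl fun j _ => ?_
  rw [eval_natCast_choosePoly, eval_natCast_derivative_choosePoly (by omega)]

theorem vandermonde_derivative_left {a b m : ℕ} (ha : m ≤ a) :
    ∑ j ∈ range (m + 1), (a.choose j : ℚ) * (H a - H (a - j)) * b.choose (m - j) =
      (a + b).choose m * (H (a + b) - H (a + b - m)) := by
  have h := sum_eval_derivative_mul_eval_of_forall_natCast _ _ _ _
    (sum_eval_choosePoly_mul_eval_choosePoly m) a b
  rw [← cast_add, eval_natCast_derivative_choosePoly (by omega)] at h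
  rw [← h]
  refine sum_congr rfl fun j hj => ?_
  rw [eval_natCast_choosePoly, eval_natCast_derivative_choosePoly (by simp at hj; omega)]

theorem vandermonde_derivative_left_right {a b m : ℕ} (ha : m ≤ a) (hb : m ≤ b) :
    ∑ j ∈ range (m + 1),
        (a.choose j : ℚ) * (H a - H (a - j)) * (b.choose (m - j) * (H b - H (b - (m - j)))) =
      (a + b).choose m * ((H (a + b) - H (a + b - m)) ^ 2 - (H2 (a + b) - H2 (a + b - m))) := by
  have h := sum_eval_derivative_mul_eval_of_forall_natCast _ _ _ _
    (sum_eval_mul_eval_derivative_of_forall_natCast _ _ _ _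
      (sum_eval_choosePoly_mul_eval_choosePoly m)) a b
  rw [← cast_add, eval_natCast_derivative_derivative_choosePoly (by omega)] at h
  rw [← h]
  refine sum_congr rfl fun j hj => ?_
  rw [eval_natCast_derivative_choosePoly (by simp at hj; omega),
    eval_natCast_derivative_choosePoly (by omega)]

theorem sum_choose_mul_choose_mul_H_mul_H (m : ℕ) :
    ∑ j ∈ range (m + 1), (m.choose j : ℚ) * m.choose (m - j) * H j * H (m - j) =
      (2 * m).choose m * ((2 * H m - H (2 * m)) ^ 2 - (H2 (2 * m) - H2 m)) := by
  have hpq := vandermonde_derivative_left_right (le_refl m) (le_refl m)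
  have hp := vandermonde_derivative_left (b := m) (le_refl m)
  have hq := vandermonde_derivative_right (a := m) (le_refl m)
  have h0 := sum_range_choose_mul_choose m m m
  rw [← two_mul] at hpq hp hq h0
  rw [show 2 * m - m = m by omega] at hpq hp hq
  have hexpand : ∑ j ∈ range (m + 1), (m.choose j : ℚ) * m.choose (m - j) * H j * H (m - j) =
      ∑ j ∈ range (m + 1),
        ((m.choose j : ℚ) * (H m - H (m - j)) * (m.choose (m - j) * (H m - H (m - (m - j)))) +
          H m ^ 2 * ((m.choose j : ℚ) * m.choose (m - j)) -
          H m * ((m.choose j : ℚ) * (H m - H (m - j)) * m.choose (m - j)) -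
          H m * ((m.choose j : ℚ) * (m.choose (m - j) * (H m - H (m - (m - j)))))) :=
    sum_congr rfl fun j hj => by
      rw [Nat.sub_sub_self (mem_range_succ_iff.mp hj)]
      ring
  rw [hexpand, sum_sub_distrib, sum_sub_distrib, sum_add_distrib, ← mul_sum, ← mul_sum, ← mul_sum,
    hpq, hp, hq, h0]
  ring

theorem sum_choose_mul_choose_succ_mul_H (m : ℕ) :
    ∑ j ∈ range (m + 1), (m.choose j : ℚ) * (m + 1).choose (m - j) * H (m - j) =
      (2 * m + 1).choose m * (H m + H (m + 1) - H (2 * m + 1)) := by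
  have hp := vandermonde_derivative_left (b := m + 1) (le_refl m)
  have h0 := sum_range_choose_mul_choose m (m + 1) m
  rw [show m + (m + 1) = 2 * m + 1 by ring] at hp h0
  rw [show 2 * m + 1 - m = m + 1 by omega] at hp
  have hexpand : ∑ j ∈ range (m + 1), (m.choose j : ℚ) * (m + 1).choose (m - j) * H (m - j) =
      ∑ j ∈ range (m + 1),
        (H m * ((m.choose j : ℚ) * (m + 1).choose (m - j)) -
          (m.choose j : ℚ) * (H m - H (m - j)) * (m + 1).choose (m - j)) :=
    sum_congr rfl fun j _ => by ring
  rw [hexpand, sum_sub_distrib, ← mul_sum, hp, h0]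
  ring

theorem choose_succ_sq_mul_sq_mul_H_succ {m j : ℕ} (hj : j ≤ m) :
    ((m + 1).choose (j + 1) : ℚ) ^ 2 * ((j : ℚ) + 1) ^ 2 * H (j + 1) =
      ((m : ℚ) + 1) ^ 2 * (m.choose j * m.choose (m - j) * H j) +
        ((m : ℚ) + 1) * (m.choose j * (m + 1).choose (m - j)) := by
  have hc : ((m + 1).choose (j + 1) : ℚ) * ((j : ℚ) + 1) = ((m : ℚ) + 1) * m.choose j := by
    exact_mod_cast (add_one_mul_choose_eq m j).symm
  have hy : ((j : ℚ) + 1) * (1 / ((j : ℚ) + 1)) = 1 := mul_one_div_cancel (by positivity)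
  rw [choose_symm hj, ← choose_symm_of_eq_add (by omega : m + 1 = (j + 1) + (m - j)), H_succ]
  linear_combination
    ((((m + 1).choose (j + 1) : ℚ) * ((j : ℚ) + 1) + ((m : ℚ) + 1) * m.choose j) * H j +
      ((m + 1).choose (j + 1) : ℚ)) * hc +
    (((m + 1).choose (j + 1) : ℚ) ^ 2 * ((j : ℚ) + 1)) * hy

theorem sum_Icc_choose_sq_mul_sq_mul_H_mul_H (m : ℕ) :
    ∑ k ∈ Icc 1 (m + 1), ((m + 1).choose k : ℚ) ^ 2 * (k : ℚ) ^ 2 * H k * H (m + 1 - k) =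
      ((m : ℚ) + 1) ^ 2 *
          ∑ j ∈ range (m + 1), (m.choose j : ℚ) * m.choose (m - j) * H j * H (m - j) +
        ((m : ℚ) + 1) *
          ∑ j ∈ range (m + 1), (m.choose j : ℚ) * (m + 1).choose (m - j) * H (m - j) := by
  rw [← Ico_add_one_right_eq_Icc, sum_Ico_eq_sum_range, add_tsub_cancel_right, mul_sum, mul_sum,
    ← sum_add_distrib]
  refine sum_congr rfl fun j hj => ?_
  rw [add_comm 1 j, show m + 1 - (j + 1) = m - j by omega, cast_add_one,
    choose_succ_sq_mul_sq_mul_H_succ (mem_range_succ_iff.mp hj)]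
  ring

theorem cast_choose_two_mul_add_one (m : ℕ) :
    ((2 * m + 1).choose m : ℚ) = (2 * m).choose m * (2 * m + 1) / (m + 1) := by
  have h := choose_mul_succ_eq (2 * m) m
  rw [show 2 * m + 1 - m = m + 1 by omega] at h
  rw [eq_div_iff (by positivity)]
  exact_mod_cast h.symm

theorem cast_choose_two_mul_succ (m : ℕ) :
    ((2 * (m + 1)).choose (m + 1) : ℚ) = 2 * (2 * m + 1) * (2 * m).choose m / (m + 1) := by
  rw [eq_div_iff (by positivity), mul_comm]
  exact_mod_cast succ_mul_centralBinom_succ m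

theorem stmt16_general (n : ℕ) :
    ∑ k ∈ Finset.Icc 1 n, (n.choose k : ℚ)^2 * (k : ℚ)^2 * H k * H (n - k)
      = (n : ℚ)^3 / (4 * n - 2) * ((2 * n).choose n : ℚ)
          * ((H2 n - H2 (2 * n - 1))
            + (2 * H n - H (2 * n - 1))
              * (2 * H n - H (2 * n - 1) - (2 * (n : ℚ)^2 - 1) / (2 * (n : ℚ)^3 - (n : ℚ)^2))
            - ((n : ℚ) - 1) * (2 * (n : ℚ)^2 - 2 * n + 1) / ((n : ℚ)^3 * (2 * (n : ℚ) - 1)^2)) := by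
  rcases n with _ | m
  · simp
  rw [sum_Icc_choose_sq_mul_sq_mul_H_mul_H, sum_choose_mul_choose_mul_H_mul_H,
    sum_choose_mul_choose_succ_mul_H, cast_choose_two_mul_add_one,
    cast_choose_two_mul_succ, show 2 * (m + 1) - 1 = 2 * m + 1 by omega,
    H_succ m, H_succ (2 * m), H2_succ m, H2_succ (2 * m)]
  push_cast
  -- factored, the denominators are visibly nonzero to `field_simp`
  rw [show 4 * ((m : ℚ) + 1) - 2 = 2 * (2 * m + 1) by ring,
    show 2 * ((m : ℚ) + 1) ^ 3 - ((m : ℚ) + 1) ^ 2 = (m + 1) ^ 2 * (2 * m + 1) by ring,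
    show 2 * ((m : ℚ) + 1) - 1 = 2 * m + 1 by ring]
  field_simp
  ring

theorem stmt16 (n : ℕ) (hn : 1 ≤ n) :
    ∑ k ∈ Finset.Icc 1 n, (n.choose k : ℚ)^2 * (k : ℚ)^2 * H k * H (n - k)
      = (n : ℚ)^3 / (4 * n - 2) * ((2 * n).choose n : ℚ)
          * ((H2 n - H2 (2 * n - 1))
            + (2 * H n - H (2 * n - 1))
              * (2 * H n - H (2 * n - 1) - (2 * (n : ℚ)^2 - 1) / (2 * (n : ℚ)^3 - (n : ℚ)^2))
            - ((n : ℚ) - 1) * (2 * (n : ℚ)^2 - 2 * n + 1) / ((n : ℚ)^3 * (2 * (n : ℚ) - 1)^2)) :=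
  stmt16_general n
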